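/- arXiv:2003.06710 — 3 statements merged into one kernel-verified Lean document; each statement's English description precedes it below -/
import Mathlib

section
/- If w ∈ S_n avoids 4231 and (p,q), (q,r) are minimal inversions of w with p < q < r, then the only index a with p < a < r and w(r) < w(a) < w(p) is a = q. -/
namespace SG

variable {α : Type*} [LinearOrder α] [Fintype α]

/-- The length (number of inversions) of a permutation. -/
noncomputable def len (w : Equiv.Perm α) : ℕ :=
  Set.ncard {p : α × α | p.1 < p.2 ∧ w p.2 < w p.1}

/-- One step of the Bruhat order: multiply by a transposition, increasing length. -/
def lt1 (u v : Equiv.Perm α) : Prop :=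
  (∃ i j : α, i ≠ j ∧ v = u * Equiv.swap i j) ∧ len u < len v

/-- The (strong) Bruhat order. -/
def le (u v : Equiv.Perm α) : Prop := Relation.ReflTransGen lt1 u v

/-- `covers u v` means `v` covers `u` in Bruhat order: `u ≤ v` and `ℓ(u) + 1 = ℓ(v)`. -/
def covers (u v : Equiv.Perm α) : Prop := le u v ∧ len u + 1 = len v

/-- `(i, j)` is a minimal inversion of `w`. -/
def MinimalInversion (w : Equiv.Perm α) (i j : α) : Prop :=
  i < j ∧ w j < w i ∧ ¬ ∃ k, i < k ∧ k < j ∧ w j < w k ∧ w k < w i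

/-- `w` contains the pattern given by the values `π 0, …, π (m-1)`. -/
def Contains (w : Equiv.Perm α) {m : ℕ} (π : Fin m → ℕ) : Prop :=
  ∃ f : Fin m → α, StrictMono f ∧ ∀ a b : Fin m, π a < π b ↔ w (f a) < w (f b)

def Avoids (w : Equiv.Perm α) {m : ℕ} (π : Fin m → ℕ) : Prop := ¬ Contains w π

/-- The set of elements of length `k` in the Bruhat interval `[e, w]`. -/
def Pk (w : Equiv.Perm α) (k : ℕ) : Set (Equiv.Perm α) := {u | le u w ∧ len u = k}

/-- The number of elements of `[e, w]` covering `u`. -/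
noncomputable def udeg (w u : Equiv.Perm α) : ℕ := {v | le v w ∧ covers u v}.ncard

/-- The number of elements of `[e, w]` covered by `u`. -/
noncomputable def ddeg (w u : Equiv.Perm α) : ℕ := {v | le v w ∧ covers v u}.ncard

end SG

open SG Equiv



lemma contains4231 {n : ℕ} (w : Equiv.Perm (Fin n)) (a b c d : Fin n)
    (hab : a < b) (hbc : b < c) (hcd : c < d)
    (h1 : w d < w b) (h2 : w b < w c) (h3 : w c < w a) :
    Contains w ![4, 2, 3, 1] := by
  refine ⟨![a, b, c, d], ?_, ?_⟩
  · intro i j hij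
    fin_cases i <;> fin_cases j <;>
      simp_all [Matrix.cons_val_zero, Matrix.cons_val_one] <;> omega
  · intro i j
    have hdb := h1
    have hdc : w d < w c := h1.trans h2
    have hda : w d < w a := hdc.trans h3
    have hba : w b < w a := h2.trans h3
    fin_cases i <;> fin_cases j <;>
      simp [Matrix.cons_val_zero, Matrix.cons_val_one] <;> omega

theorem stmt4 {n : ℕ} (w : Equiv.Perm (Fin n)) (p q r : Fin n)
    (havoid : Avoids w ![4, 2, 3, 1])
    (h1 : MinimalInversion w p q) (h2 : MinimalInversion w q r) :
    ∀ a : Fin n, p < a → a < r → w r < w a → w a < w p → a = q := by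
  intro a hpa har hra hap
  by_contra hne
  rcases lt_trichotomy a q with hlt | heq | hgt
  · -- p < a < q : from minimality of (p,q), w a < w q
    have hne' : w a ≠ w q := fun h => hne (w.injective h)
    have haq : w a < w q := by
      rcases lt_or_ge (w q) (w a) with h | h
      · exact absurd ⟨a, hpa, hlt, h, hap⟩ h1.2.2
      · exact lt_of_le_of_ne h hne'
    exact havoid (contains4231 w p a q r hpa hlt h2.1 hra haq h1.2.1)
  · exact hne heq
  · have hne' : w q ≠ w a := fun h => hne (w.injective h.symm)
    have hqa : w q < w a := by
      rcases lt_or_ge (w a) (w q) with h | h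
      · exact absurd ⟨a, hgt, har, hra, h⟩ h2.2.2
      · exact lt_of_le_of_ne h hne'
    exact havoid (contains4231 w p q a r h1.1 hgt har h2.2.1 hqa hap)
end

section
/- For a finite Coxeter system (W,S) and J ⊆ S, the element w₀(J)·w₀(J∩J') lies in the parabolic quotient W^{J'}, i.e., it has no right descents in J'. -/
namespace Cox

variable {B : Type*} {W : Type*} [Group W] {M : CoxeterMatrix B} (cs : CoxeterSystem M W)

/-- One step of Bruhat order: right-multiply by a reflection, increasing length. -/
def lt1 (u v : W) : Prop :=
  (∃ t : W, cs.IsReflection t ∧ v = u * t) ∧ cs.length u < cs.length v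

/-- The (strong) Bruhat order on `W`. -/
def le (u v : W) : Prop := Relation.ReflTransGen (lt1 cs) u v

/-- The support of `w`: the simple reflections lying below `w` in Bruhat order
(equivalently, appearing in any reduced word for `w`). -/
def supp (w : W) : Set B := {i | le cs (cs.simple i) w}

/-- The standard parabolic subgroup generated by the simple reflections in `K`. -/
def parab (K : Set B) : Subgroup W := Subgroup.closure (cs.simple '' K)

/-- `x` belongs to the parabolic quotient `W^K`: no right descents in `K`. -/
def InQuot (K : Set B) (x : W) : Prop :=
  ∀ i ∈ K, cs.length x < cs.length (x * cs.simple i)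

/-- The left descent set of `v`. -/
def DescL (v : W) : Set B := {i | cs.length (cs.simple i * v) < cs.length v}

/-- `x` is the longest element of the standard parabolic subgroup `W_K`. -/
def IsLongest (K : Set B) (x : W) : Prop :=
  x ∈ parab cs K ∧ ∀ y ∈ parab cs K, cs.length y ≤ cs.length x

end Cox

open Cox

/-!
Write `N(w)` for the set of right inversions of `w`. For `x` the longest element of `W_K`,
`N(x)` is the set of all reflections of `W_K`. The reflection cocycle `η`, which is the
indicator of `N(w)` (strong exchange), gives `N(x u) = N(x) \ N(u)` for `u ∈ W_K`, and with
`|N(w)| = ℓ(w)` this yields `ℓ(x u) = ℓ(x) - ℓ(u)`. For `i ∈ J ∩ J'`, `sᵢ` is a descent of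
`w₀(J ∩ J')`, so `ℓ(w₀(J) w₀(J ∩ J') sᵢ) = ℓ(w₀(J)) - ℓ(w₀(J ∩ J') sᵢ) > ℓ(w₀(J) w₀(J ∩ J'))`.
For `i ∈ J' \ J`, a descent `sᵢ` of an element of `W_J` would lie in `W_J`, which the geometric
representation rules out: `W_J` fixes the `eᵢ`-coordinate, whereas `sᵢ eᵢ = -eᵢ`.
-/

namespace Cox

open CoxeterSystem

lemma mul_mul_eq_iff_of_mul_mul_eq {G : Type*} [Group G] {a b t x y : G} (h : a * x * b = y) :
    a * t * b = y ↔ t = x := by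
  rw [← h, mul_right_cancel_iff, mul_left_cancel_iff]

section Geometric

open Real Finsupp

variable {B : Type*} (M : CoxeterMatrix B)

/-- `v ↦ B(eₖ, v)` for the Tits form `B(eₖ, eₗ) = -cos (π / M k l)`. For `M k l = 0`, i.e.
`mₖₗ = ∞`, the junk value `π / 0 = 0` gives the correct `B(eₖ, eₗ) = -1`. -/
noncomputable def geomPair (k : B) : (B →₀ ℝ) →ₗ[ℝ] ℝ :=
  linearCombination ℝ fun l => -cos (π / M k l)

noncomputable def geomRefl (k : B) : Module.End ℝ (B →₀ ℝ) :=
  LinearMap.id - (geomPair M k).smulRight (single k 2)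

lemma geomRefl_apply (k : B) (v : B →₀ ℝ) :
    geomRefl M k v = v - (2 * geomPair M k v) • single k 1 := by
  simp [geomRefl, mul_comm, mul_smul]

lemma geomPair_single (k l : B) (x : ℝ) :
    geomPair M k (single l x) = -cos (π / M k l) * x := by
  simp [geomPair, mul_comm]

lemma geomPair_single_self (k : B) (x : ℝ) : geomPair M k (single k x) = x := by
  simp [geomPair_single]

lemma geomRefl_apply_of_ne {i k : B} (h : i ≠ k) (v : B →₀ ℝ) : geomRefl M k v i = v i := by
  simp [geomRefl_apply, single_eq_of_ne h]

lemma geomRefl_single_self (k : B) : geomRefl M k (single k 1) = -single k 1 := by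
  rw [geomRefl_apply, geomPair_single_self]
  module

lemma geomRefl_geomRefl (k : B) (v : B →₀ ℝ) : geomRefl M k (geomRefl M k v) = v := by
  rw [geomRefl_apply, geomRefl_apply, map_sub, map_smul, geomPair_single_self]
  module

lemma geomRefl_eq_self {k : B} {v : B →₀ ℝ} (h : geomPair M k v = 0) : geomRefl M k v = v := by
  simp [geomRefl_apply, h]

lemma geomRefl_apply_plane (k l : B) (x y : ℝ) :
    geomRefl M l (x • single k 1 + y • single l 1) =
      x • single k 1 + (2 * cos (π / M k l) * x - y) • single l 1 := by
  simp only [geomRefl_apply, map_add, map_smul, geomPair_single, M.diagonal, M.symmetric l k,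
    Nat.cast_one, div_one, cos_pi]
  module

lemma exists_geomPair_sub_plane_eq_zero {k l : B} (hc : cos (π / M k l) ^ 2 ≠ 1)
    (v : B →₀ ℝ) : ∃ x y : ℝ,
      geomPair M k (v - (x • single k 1 + y • single l 1)) = 0 ∧
      geomPair M l (v - (x • single k 1 + y • single l 1)) = 0 := by
  have hc' : 1 - cos (π / M k l) ^ 2 ≠ 0 := sub_ne_zero.mpr hc.symm
  simp only [map_sub, map_add, map_smul, geomPair_single, M.diagonal, M.symmetric l k,
    Nat.cast_one, div_one, cos_pi, smul_eq_mul]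
  generalize cos (π / M k l) = c at *
  refine ⟨(geomPair M k v + c * geomPair M l v) / (1 - c ^ 2),
    (geomPair M l v + c * geomPair M k v) / (1 - c ^ 2), ?_, ?_⟩ <;>
  · field_simp
    ring

/-- On these vectors, with `θ = π / M k l`, the rotation `σₖ σₗ` acts as `φ ↦ φ + 2θ`. -/
noncomputable def planeVec (k l : B) (φ : ℝ) : B →₀ ℝ :=
  sin (φ + π / M k l) • single k 1 + sin φ • single l 1

lemma two_mul_cos_mul_sin_add_sub_sin (θ φ : ℝ) :
    2 * cos θ * sin (φ + θ) - sin φ = sin (φ + θ + θ) := by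
  have h := sin_sub (φ + θ) θ
  rw [add_sub_cancel_right] at h
  rw [h, sin_add (φ + θ)]
  ring

lemma geomRefl_mul_geomRefl_planeVec (k l : B) (φ : ℝ) :
    (geomRefl M k * geomRefl M l) (planeVec M k l φ) =
      planeVec M k l (φ + 2 * (π / M k l)) := by
  rw [Module.End.mul_apply, planeVec, geomRefl_apply_plane, two_mul_cos_mul_sin_add_sub_sin,
    add_comm, geomRefl_apply_plane, M.symmetric l k, two_mul_cos_mul_sin_add_sub_sin, planeVec,
    add_comm]
  ring_nf

lemma geomRefl_mul_geomRefl_pow_planeVec (k l : B) (n : ℕ) (φ : ℝ) :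
    ((geomRefl M k * geomRefl M l) ^ n) (planeVec M k l φ) =
      planeVec M k l (φ + n * (2 * (π / M k l))) := by
  induction n generalizing φ with
  | zero => simp
  | succ n ih =>
    rw [pow_succ, Module.End.mul_apply, geomRefl_mul_geomRefl_planeVec, ih]
    push_cast
    ring_nf

lemma geomRefl_mul_geomRefl_pow_planeVec_self {k l : B} (hm : M k l ≠ 0) (φ : ℝ) :
    ((geomRefl M k * geomRefl M l) ^ M k l) (planeVec M k l φ) = planeVec M k l φ := by
  have hm' : (M k l : ℝ) ≠ 0 := Nat.cast_ne_zero.mpr hm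
  rw [geomRefl_mul_geomRefl_pow_planeVec,
    show φ + M k l * (2 * (π / M k l)) = φ + 2 * π by field_simp]
  simp only [planeVec, add_right_comm _ (2 * π), sin_add_two_pi]

lemma planeVec_zero (k l : B) : planeVec M k l 0 = sin (π / M k l) • single k 1 := by
  simp [planeVec]

lemma planeVec_neg (k l : B) : planeVec M k l (-(π / M k l)) = -sin (π / M k l) • single l 1 := by
  simp [planeVec]

lemma geomRefl_isLiftable : M.IsLiftable (geomRefl M) := by
  intro k l
  by_cases hkl : k = l
  · subst hkl
    refine LinearMap.ext fun v => ?_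
    simp [geomRefl_geomRefl]
  by_cases hm : M k l = 0
  · simp [hm]
  have hm₂ : 2 ≤ M k l := by have := M.off_diagonal k l hkl; omega
  have hθ : 0 < π / M k l ∧ π / M k l < π :=
    ⟨by positivity, div_lt_self pi_pos (by exact_mod_cast hm₂)⟩
  have hsin : sin (π / M k l) ≠ 0 := (sin_pos_of_pos_of_lt_pi hθ.1 hθ.2).ne'
  have hcos : cos (π / M k l) ^ 2 ≠ 1 := by
    have := sin_sq_add_cos_sq (π / M k l)
    intro h
    exact hsin (by nlinarith)
  set g := (geomRefl M k * geomRefl M l) ^ M k l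
  have hfix := geomRefl_mul_geomRefl_pow_planeVec_self M hm
  have hk : g (single k 1) = single k 1 := by
    have := hfix 0
    rwa [planeVec_zero, map_smul, smul_right_inj hsin] at this
  have hl : g (single l 1) = single l 1 := by
    have := hfix (-(π / M k l))
    rwa [planeVec_neg, map_smul, smul_right_inj (neg_ne_zero.mpr hsin)] at this
  -- `g` fixes `eₖ`, `eₗ` and the common kernel of the two pairings, which together span.
  refine LinearMap.ext fun v => ?_
  obtain ⟨x, y, hxk, hxl⟩ := exists_geomPair_sub_plane_eq_zero M hcos v
  have hker : g (v - (x • single k 1 + y • single l 1)) = v - (x • single k 1 + y • single l 1) := by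
    rw [Module.End.pow_apply]
    refine Function.iterate_fixed ?_ _
    rw [Module.End.mul_apply, geomRefl_eq_self M hxl, geomRefl_eq_self M hxk]
  rw [map_sub, map_add, map_smul, map_smul, hk, hl, sub_left_inj] at hker
  exact hker

end Geometric

section Parity

open scoped Classical

variable {B W : Type*} [Group W] {M : CoxeterMatrix B} (cs : CoxeterSystem M W)

local prefix:100 "s" => cs.simple
local prefix:100 "π" => cs.wordProd
local prefix:100 "ℓ" => cs.length

noncomputable def parityAction (i : B) : Function.End (W × ZMod 2) :=
  fun x => (s i * x.1 * s i, x.2 + if x.1 = s i then 1 else 0)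

lemma parityAction_apply (i : B) (t : W) (ε : ZMod 2) :
    parityAction cs i (t, ε) = (s i * t * s i, ε + if t = s i then 1 else 0) := rfl

lemma parityAction_mul_apply (i j : B) (t : W) (ε : ZMod 2) :
    (parityAction cs i * parityAction cs j) (t, ε) =
      (s i * s j * t * (s j * s i), ε + ((if t = s j then 1 else 0) +
        if t = s j * s i * s j then 1 else 0)) := by
  have h : s j * t * s j = s i ↔ t = s j * s i * s j :=
    mul_mul_eq_iff_of_mul_mul_eq (by simp [mul_assoc])
  show parityAction cs i (parityAction cs j (t, ε)) = _
  simp only [parityAction_apply, h]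
  exact Prod.ext (by simp [mul_assoc]) (add_assoc _ _ _)

lemma parityAction_mul_pow_apply (i j : B) (n : ℕ) (t : W) (ε : ZMod 2) :
    ((parityAction cs i * parityAction cs j) ^ n) (t, ε) =
      ((s i * s j) ^ n * t * (s j * s i) ^ n,
        ε + ∑ r ∈ Finset.range (2 * n), if t = (s j * s i) ^ r * s j then 1 else 0) := by
  induction n generalizing t ε with
  | zero => simp [Function.End.one_def]
  | succ n ih =>
    have h (r : ℕ) : s i * s j * t * (s j * s i) = (s j * s i) ^ r * s j ↔
        t = (s j * s i) ^ (r + 2) * s j :=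
      mul_mul_eq_iff_of_mul_mul_eq (by rw [pow_succ, pow_succ']; simp [mul_assoc])
    show ((parityAction cs i * parityAction cs j) ^ n)
      ((parityAction cs i * parityAction cs j) (t, ε)) = _
    rw [parityAction_mul_apply, ih, show 2 * (n + 1) = 2 * n + 1 + 1 by ring,
      Finset.sum_range_succ', Finset.sum_range_succ']
    simp only [h, zero_add, pow_zero, pow_one, one_mul]
    refine Prod.ext ?_ ?_
    · simp only [pow_succ (s i * s j) n, pow_succ' (s j * s i) n, mul_assoc]
    · simp only
      ring

lemma parityAction_isLiftable : M.IsLiftable (parityAction cs) := by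
  intro i j
  funext ⟨t, ε⟩
  -- `r ↦ (sⱼ sᵢ) ^ r * sⱼ` has period `M i j`, so every term of the sum occurs twice.
  rw [parityAction_mul_pow_apply, simple_mul_simple_pow, simple_mul_simple_pow', two_mul,
    Finset.sum_range_add]
  simp only [pow_add, simple_mul_simple_pow', one_mul, mul_one, CharTwo.add_self_eq_zero,
    add_zero]
  rfl

noncomputable def parityRep : W →* Function.End (W × ZMod 2) :=
  cs.lift ⟨parityAction cs, parityAction_isLiftable cs⟩

lemma parityRep_wordProd_apply (ω : List B) (t : W) (ε : ZMod 2) :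
    parityRep cs (π ω) (t, ε) =
      (π ω * t * (π ω)⁻¹, ε + ((cs.rightInvSeq ω).count t : ZMod 2)) := by
  induction ω generalizing ε with
  | nil => simp [Function.End.one_def]
  | cons i ω ih =>
    have h : π ω * t * (π ω)⁻¹ = s i ↔ (π ω)⁻¹ * s i * π ω = t := by
      rw [mul_mul_eq_iff_of_mul_mul_eq (x := (π ω)⁻¹ * s i * π ω) (by group), eq_comm]
    rw [wordProd_cons, map_mul]
    show parityRep cs (s i) (parityRep cs (π ω) (t, ε)) = _
    rw [ih, parityRep, lift_apply_simple, parityAction_apply, rightInvSeq, List.count_cons]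
    refine Prod.ext (by simp [mul_assoc]) ?_
    simp only [beq_iff_eq, h]
    push_cast
    ring

/-- The reflection cocycle `η(w, t)` of Björner–Brenti. -/
noncomputable def invParity (w t : W) : ZMod 2 := (parityRep cs w (t, 0)).2

lemma invParity_wordProd (ω : List B) (t : W) :
    invParity cs (π ω) t = (cs.rightInvSeq ω).count t := by
  simp [invParity, parityRep_wordProd_apply]

lemma parityRep_apply (w t : W) (ε : ZMod 2) :
    parityRep cs w (t, ε) = (w * t * w⁻¹, ε + invParity cs w t) := by
  obtain ⟨ω, -, rfl⟩ := cs.exists_isReduced w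
  rw [parityRep_wordProd_apply, invParity_wordProd]

lemma invParity_mul (u v t : W) :
    invParity cs (u * v) t = invParity cs v t + invParity cs u (v * t * v⁻¹) := by
  rw [invParity, map_mul]
  show (parityRep cs u (parityRep cs v (t, 0))).2 = _
  rw [parityRep_apply, parityRep_apply, zero_add]

lemma invParity_simple (i : B) (t : W) : invParity cs (s i) t = if s i = t then 1 else 0 := by
  simpa [List.count_singleton] using invParity_wordProd cs [i] t

lemma invParity_inv_conj (w t : W) : invParity cs w⁻¹ (w * t * w⁻¹) = invParity cs w t := by
  have h := invParity_mul cs w⁻¹ w t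
  rw [inv_mul_cancel, show invParity cs 1 t = 0 by simpa using invParity_wordProd cs [] t] at h
  exact (CharTwo.add_eq_zero.mp h.symm).symm

lemma invParity_self {t : W} (ht : cs.IsReflection t) : invParity cs t t = 1 := by
  obtain ⟨v, i, rfl⟩ := ht
  rw [invParity_mul, invParity_inv_conj, show v⁻¹ * (v * s i * v⁻¹) * v⁻¹⁻¹ = s i by group,
    invParity_mul, invParity_simple, if_pos rfl, simple_mul_simple_self, one_mul, inv_simple,
    add_left_comm, CharTwo.add_self_eq_zero, add_zero]

lemma invParity_eq_zero_of_length_le {w t : W} (h : ℓ w ≤ ℓ (w * t)) : invParity cs w t = 0 := by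
  obtain ⟨ω, hω, rfl⟩ := cs.exists_isReduced w
  rw [invParity_wordProd, List.count_eq_zero.mpr fun ht =>
    (cs.isRightInversion_of_mem_rightInvSeq hω ht).2.not_ge h, Nat.cast_zero]

lemma isRightInversion_iff_invParity {w t : W} :
    cs.IsRightInversion w t ↔ cs.IsReflection t ∧ invParity cs w t = 1 := by
  refine ⟨fun ht => ⟨ht.1, ?_⟩, fun ⟨ht, h⟩ => ⟨ht, ?_⟩⟩
  · have h := invParity_mul cs (w * t) t t
    rwa [mul_inv_cancel_right, mul_assoc, ht.1.mul_self, mul_one, invParity_self cs ht.1,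
      invParity_eq_zero_of_length_le cs (w := w * t)
        (by rw [mul_assoc, ht.1.mul_self, mul_one]; exact ht.2.le),
      add_zero] at h
  · by_contra hlt
    rw [invParity_eq_zero_of_length_le cs (not_lt.mp hlt)] at h
    exact zero_ne_one h

lemma mem_rightInvSeq_iff {ω : List B} (hω : cs.IsReduced ω) {t : W} :
    t ∈ cs.rightInvSeq ω ↔ cs.IsRightInversion (π ω) t := by
  refine ⟨cs.isRightInversion_of_mem_rightInvSeq hω, fun ht => ?_⟩
  have h := ((isRightInversion_iff_invParity cs).mp ht).2
  rw [invParity_wordProd] at h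
  exact List.count_pos_iff.mp (Nat.pos_of_ne_zero fun h0 => by simp [h0] at h)

lemma setOf_isRightInversion_wordProd {ω : List B} (hω : cs.IsReduced ω) :
    {t | cs.IsRightInversion (π ω) t} = (cs.rightInvSeq ω).toFinset := by
  ext t
  simp [mem_rightInvSeq_iff cs hω]

lemma finite_setOf_isRightInversion (w : W) : {t | cs.IsRightInversion w t}.Finite := by
  obtain ⟨ω, hω, rfl⟩ := cs.exists_isReduced w
  rw [setOf_isRightInversion_wordProd cs hω]
  exact Finset.finite_toSet _

lemma ncard_setOf_isRightInversion (w : W) : {t | cs.IsRightInversion w t}.ncard = ℓ w := by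
  obtain ⟨ω, hω, rfl⟩ := cs.exists_isReduced w
  rw [setOf_isRightInversion_wordProd cs hω, Set.ncard_coe_finset,
    List.toFinset_card_of_nodup hω.nodup_rightInvSeq, length_rightInvSeq, hω.eq]

lemma conj_mem_parab_iff {K : Set B} {w t : W} (hw : w ∈ parab cs K) :
    w * t * w⁻¹ ∈ parab cs K ↔ t ∈ parab cs K :=
  ((parab cs K).mul_mem_cancel_right (inv_mem hw)).trans ((parab cs K).mul_mem_cancel_left hw)

lemma invParity_eq_zero_of_notMem_parab {K : Set B} {w t : W} (hw : w ∈ parab cs K)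
    (ht : t ∉ parab cs K) : invParity cs w t = 0 := by
  induction hw using Subgroup.closure_induction generalizing t with
  | mem _ hx =>
    obtain ⟨k, hk, rfl⟩ := hx
    rw [invParity_simple, if_neg]
    rintro rfl
    exact ht (Subgroup.subset_closure ⟨k, hk, rfl⟩)
  | one => simpa using invParity_wordProd cs [] t
  | mul x y hx hy ihx ihy =>
    rw [invParity_mul, ihy ht, ihx ((conj_mem_parab_iff cs hy).not.mpr ht), add_zero]
  | inv x hx ih =>
    have h := invParity_inv_conj cs x (x⁻¹ * t * x)
    rw [show x * (x⁻¹ * t * x) * x⁻¹ = t by group] at h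
    rw [h, ih]
    rwa [← inv_inv x, inv_inv x⁻¹, conj_mem_parab_iff cs (inv_mem hx)]

lemma mem_parab_of_isRightInversion {K : Set B} {w t : W} (hw : w ∈ parab cs K)
    (ht : cs.IsRightInversion w t) : t ∈ parab cs K := by
  by_contra h
  have h₁ := ((isRightInversion_iff_invParity cs).mp ht).2
  rw [invParity_eq_zero_of_notMem_parab cs hw h] at h₁
  exact zero_ne_one h₁

end Parity

section Parabolic

variable {B W : Type*} [Group W] {M : CoxeterMatrix B} (cs : CoxeterSystem M W)

noncomputable def geomRep : W →* Module.End ℝ (B →₀ ℝ) :=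
  cs.lift ⟨geomRefl M, geomRefl_isLiftable M⟩

lemma geomRep_apply_of_notMem {K : Set B} {w : W} (hw : w ∈ parab cs K) {i : B} (hi : i ∉ K)
    (v : B →₀ ℝ) : geomRep cs w v i = v i := by
  induction hw using Subgroup.closure_induction generalizing v with
  | mem _ hx =>
    obtain ⟨k, hk, rfl⟩ := hx
    rw [geomRep, lift_apply_simple, geomRefl_apply_of_ne M (ne_of_mem_of_not_mem hk hi).symm]
  | one => rw [map_one, Module.End.one_apply]
  | mul x y _ _ ihx ihy => rw [map_mul, Module.End.mul_apply, ihx, ihy]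
  | inv x _ ih =>
    rw [← ih, ← Module.End.mul_apply, ← map_mul, mul_inv_cancel, map_one, Module.End.one_apply]

lemma simple_mem_parab_iff {K : Set B} {i : B} : cs.simple i ∈ parab cs K ↔ i ∈ K := by
  refine ⟨fun h => by_contra fun hi => ?_, fun hi => Subgroup.subset_closure ⟨i, hi, rfl⟩⟩
  have h₁ := geomRep_apply_of_notMem cs h hi (Finsupp.single i 1)
  rw [geomRep, lift_apply_simple, geomRefl_single_self] at h₁
  norm_num at h₁

variable {cs}

lemma IsLongest.isRightInversion {K : Set B} {x t : W} (hx : IsLongest cs K x)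
    (ht : cs.IsReflection t) (htK : t ∈ parab cs K) : cs.IsRightInversion x t :=
  ⟨ht, lt_of_le_of_ne (hx.2 _ (mul_mem hx.1 htK)) (ht.length_mul_left_ne x)⟩

lemma IsLongest.setOf_isRightInversion {K : Set B} {x : W} (hx : IsLongest cs K x) :
    {t | cs.IsRightInversion x t} = {t | cs.IsReflection t ∧ t ∈ parab cs K} :=
  Set.ext fun _ => ⟨fun ht => ⟨ht.1, mem_parab_of_isRightInversion cs hx.1 ht⟩,
    fun ⟨ht, htK⟩ => hx.isRightInversion ht htK⟩

lemma IsLongest.setOf_isRightInversion_mul {K : Set B} {x u : W} (hx : IsLongest cs K x)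
    (hu : u ∈ parab cs K) :
    {t | cs.IsRightInversion (x * u) t} =
      {t | cs.IsRightInversion x t} \ {t | cs.IsRightInversion u t} := by
  have key {t : W} (ht : cs.IsReflection t) (htK : t ∈ parab cs K) :
      invParity cs (x * u) t = invParity cs u t + 1 := by
    rw [invParity_mul, ((isRightInversion_iff_invParity cs).mp
      (hx.isRightInversion (ht.conj u) ((conj_mem_parab_iff cs hu).mpr htK))).2]
  ext t
  simp only [Set.mem_sdiff, Set.mem_ofPred_eq, hx.setOf_isRightInversion]
  refine ⟨fun ht => ?_, fun ⟨⟨ht, htK⟩, htu⟩ => ?_⟩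
  · have htK := mem_parab_of_isRightInversion cs (mul_mem hx.1 hu) ht
    rw [isRightInversion_iff_invParity, key ht.1 htK] at ht
    refine ⟨⟨ht.1, htK⟩, fun htu => ?_⟩
    rw [((isRightInversion_iff_invParity cs).mp htu).2] at ht
    exact absurd ht.2 (by decide)
  · have h₀ : invParity cs u t = 0 :=
      invParity_eq_zero_of_length_le cs (not_lt.mp fun h => htu ⟨ht, h⟩)
    rw [isRightInversion_iff_invParity, key ht htK, h₀, zero_add]
    exact ⟨ht, rfl⟩

lemma IsLongest.length_mul_add_length {K : Set B} {x u : W} (hx : IsLongest cs K x)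
    (hu : u ∈ parab cs K) : cs.length (x * u) + cs.length u = cs.length x := by
  have hsub : {t | cs.IsRightInversion u t} ⊆ {t | cs.IsRightInversion x t} := by
    rw [hx.setOf_isRightInversion]
    exact fun t ht => ⟨ht.1, mem_parab_of_isRightInversion cs hu ht⟩
  have h := Set.ncard_sdiff_add_ncard_of_subset hsub (finite_setOf_isRightInversion cs x)
  rwa [← hx.setOf_isRightInversion_mul hu, ncard_setOf_isRightInversion,
    ncard_setOf_isRightInversion, ncard_setOf_isRightInversion] at h

end Parabolic

end Cox

theorem stmt7_general {B W : Type*} [Group W] {M : CoxeterMatrix B}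
    (cs : CoxeterSystem M W) (J Jp : Set B) (wJ wI : W)
    (hJ : IsLongest cs J wJ) (hI : IsLongest cs (J ∩ Jp) wI) :
    InQuot cs Jp (wJ * wI) := by
  intro i hi
  have hIJ : parab cs (J ∩ Jp) ≤ parab cs J :=
    Subgroup.closure_mono (Set.image_mono Set.inter_subset_left)
  by_cases hiJ : i ∈ J
  · have hsi : cs.simple i ∈ parab cs (J ∩ Jp) := (simple_mem_parab_iff cs).mpr ⟨hiJ, hi⟩
    have h₁ := hJ.length_mul_add_length (hIJ hI.1)
    have h₂ := hJ.length_mul_add_length (hIJ (mul_mem hI.1 hsi))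
    have h₃ := (hI.isRightInversion (cs.isReflection_simple i) hsi).2
    rw [← mul_assoc] at h₂
    omega
  · refine lt_of_not_ge fun h => hiJ ((simple_mem_parab_iff cs).mp ?_)
    exact mem_parab_of_isRightInversion cs (mul_mem hJ.1 (hIJ hI.1))
      ⟨cs.isReflection_simple i, lt_of_le_of_ne h (cs.length_mul_simple_ne _ i)⟩

theorem stmt7 {B W : Type*} [Group W] [Finite W] {M : CoxeterMatrix B}
    (cs : CoxeterSystem M W) (J Jp : Set B) (wJ wI : W)
    (hJ : IsLongest cs J wJ) (hI : IsLongest cs (J ∩ Jp) wI) :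
    InQuot cs Jp (wJ * wI) :=
  stmt7_general cs J Jp wJ wI hJ hI
end

section
/- Let (W,S) be a Coxeter system, K ⊆ S, and u ∈ W such that the parabolic decomposition u = u^K·u_K is a BP-decomposition, meaning supp(u^K) ∩ K ⊆ D_L(u_K). Then the multiplication map from ([e,u^K] ∩ W^K) × [e,u_K] to [e,u], sending (x,y) to xy, is an order-preserving bijection (with the product order on the domain). -/
open Cox

/-!
Every `z ≤ x y` is a product `a b` with `a ≤ x` and `b ≤ y`, read off a subword of a reduced word
for `x` followed by one for `y`. While `a` has a right descent `s ∈ K`, we have `s ≤ a ≤ x`, so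
`s ∈ supp x ∩ K ⊆ D_L(y)`, and the lifting property gives `s b ≤ y`; replacing `(a, b)` by
`(a s, s b)` shortens `a`, and ends with `a ∈ W^K`. Injectivity is the uniqueness of parabolic
factorizations, and monotonicity follows from the subword property because
`ℓ(a b) = ℓ(a) + ℓ(b)` for `a ∈ W^K`, `b ∈ W_K`.

The subword property rests on the strong exchange condition, which we derive from the reflection
cocycle: `s_i ↦ ((t, ε) ↦ (s_i t s_i, ε + [t = s_i]))` respects the Coxeter relations, and the
resulting `ε`-component counts, modulo 2, the occurrences of `t` in the right inversion sequence of
any word for `w`; it is `1` exactly when `ℓ(w t) < ℓ(w)`.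
-/

namespace Cox

variable {B W : Type*} [Group W] {M : CoxeterMatrix B} {cs : CoxeterSystem M W}

theorem le.refl (w : W) : le cs w w := Relation.ReflTransGen.refl

theorem le.trans {u v w : W} (h₁ : le cs u v) (h₂ : le cs v w) : le cs u w :=
  Relation.ReflTransGen.trans h₁ h₂

end Cox

namespace CoxeterSystem

open List

variable {B : Type*} {W : Type*} [Group W] {M : CoxeterMatrix B} (cs : CoxeterSystem M W)

local prefix:100 "s" => cs.simple
local prefix:100 "π" => cs.wordProd
local prefix:100 "ℓ" => cs.length
local prefix:100 "ris" => cs.rightInvSeq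

theorem prod_map_alternatingWord_two_mul {G : Type*} [Monoid G] (f : B → G) (i j : B) (m : ℕ) :
    ((alternatingWord i j (2 * m)).map f).prod = (f i * f j) ^ m := by
  induction m with
  | zero => simp [alternatingWord]
  | succ m ih =>
    rw [show 2 * (m + 1) = 2 * m + 1 + 1 by ring, alternatingWord_succ', alternatingWord_succ',
      if_neg (Nat.not_even_two_mul_add_one m), if_pos (even_two_mul m)]
    simp [ih, pow_succ', mul_assoc]

theorem rightInvSeq_alternatingWord (i j : B) (n : ℕ) :
    ris (alternatingWord i j n) = ((range n).map fun q => s j * (s i * s j) ^ q).reverse := by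
  induction n generalizing i j with
  | zero => simp [alternatingWord]
  | succ n ih =>
    rw [alternatingWord_succ, rightInvSeq_concat, ih, range_succ_eq_map]
    simp [← mul_assoc, ← mul_pow_mul, pow_succ', cs.inv_simple]
    intro a _
    rw [mul_assoc _ (s j), ← pow_succ, pow_succ']

section ReflectionCocycle

open scoped Classical

theorem count_rightInvSeq_alternatingWord_two_mul {i j : B} {m : ℕ} (hm : (s i * s j) ^ m = 1)
    (t : W) : ((ris (alternatingWord i j (2 * m))).count t : ZMod 2) = 0 := by
  have hperiodic : ∀ q, s j * (s i * s j) ^ (m + q) = s j * (s i * s j) ^ q := by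
    simp [pow_add, hm]
  rw [rightInvSeq_alternatingWord, count_reverse, two_mul, range_add, map_append, map_map,
    count_append]
  simp only [Function.comp_def, hperiodic, Nat.cast_add, CharTwo.add_self_eq_zero]

/-- Björner–Brenti's permutation `π_s` of `T × {±1}`, with `{±1}` written additively and extended
to all of `W × ZMod 2`. -/
noncomputable def reflectionPerm (i : B) : Equiv.Perm (W × ZMod 2) :=
  Function.Involutive.toPerm (fun p => (s i * p.1 * s i, p.2 + if p.1 = s i then 1 else 0)) <| by
    rintro ⟨t, ε⟩
    simp [mul_assoc, cs.simple_mul_simple_cancel_left, mul_eq_one_iff_eq_inv, cs.inv_simple,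
      add_assoc, CharTwo.add_self_eq_zero]

theorem reflectionPerm_apply (i : B) (t : W) (ε : ZMod 2) :
    cs.reflectionPerm i (t, ε) = (s i * t * s i, ε + if t = s i then 1 else 0) :=
  rfl

theorem prod_map_reflectionPerm_apply (ω : List B) (t : W) (ε : ZMod 2) :
    (ω.map cs.reflectionPerm).prod (t, ε) = (π ω * t * (π ω)⁻¹, ε + (ris ω).count t) := by
  induction ω generalizing ε with
  | nil => simp
  | cons i ω ih =>
    have hmem : π ω * t * (π ω)⁻¹ = s i ↔ (π ω)⁻¹ * s i * π ω = t := by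
      constructor <;> intro h <;> rw [← h] <;> group
    simp only [map_cons, prod_cons, Equiv.Perm.mul_apply, ih, reflectionPerm_apply, rightInvSeq,
      count_cons, beq_iff_eq, hmem, wordProd_cons, mul_inv_rev, cs.inv_simple, Prod.mk.injEq]
    constructor
    · group
    · split_ifs <;> push_cast <;> ring

theorem isLiftable_reflectionPerm : M.IsLiftable cs.reflectionPerm := by
  intro i j
  rw [← prod_map_alternatingWord_two_mul]
  ext ⟨t, ε⟩ : 1
  have hπ : π (alternatingWord i j (2 * M i j)) = 1 := by
    rw [wordProd, prod_map_alternatingWord_two_mul, cs.simple_mul_simple_pow]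
  rw [prod_map_reflectionPerm_apply, hπ,
    count_rightInvSeq_alternatingWord_two_mul cs (cs.simple_mul_simple_pow i j)]
  simp

noncomputable def reflectionRep : W →* Equiv.Perm (W × ZMod 2) :=
  cs.lift ⟨cs.reflectionPerm, cs.isLiftable_reflectionPerm⟩

/-- Parity of the number of occurrences of `t` in the right inversion sequence of any word
for `w`. -/
noncomputable def rightInvParity (w t : W) : ZMod 2 := (cs.reflectionRep w (t, 0)).2

theorem reflectionRep_wordProd (ω : List B) :
    cs.reflectionRep (π ω) = (ω.map cs.reflectionPerm).prod := by
  rw [wordProd, map_list_prod, map_map]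
  congr 1
  exact map_congr_left fun i _ => cs.lift_apply_simple cs.isLiftable_reflectionPerm i

theorem rightInvParity_wordProd (ω : List B) (t : W) :
    cs.rightInvParity (π ω) t = (ris ω).count t := by
  simp [rightInvParity, reflectionRep_wordProd, prod_map_reflectionPerm_apply]

theorem reflectionRep_apply (w t : W) (ε : ZMod 2) :
    cs.reflectionRep w (t, ε) = (w * t * w⁻¹, ε + cs.rightInvParity w t) := by
  obtain ⟨ω, rfl⟩ := cs.wordProd_surjective w
  rw [reflectionRep_wordProd, prod_map_reflectionPerm_apply, rightInvParity_wordProd]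

theorem rightInvParity_mul (u v t : W) :
    cs.rightInvParity (u * v) t = cs.rightInvParity v t + cs.rightInvParity u (v * t * v⁻¹) := by
  rw [rightInvParity, map_mul, Equiv.Perm.mul_apply, reflectionRep_apply, reflectionRep_apply,
    zero_add]

theorem rightInvParity_one (t : W) : cs.rightInvParity 1 t = 0 := by
  simpa using cs.rightInvParity_wordProd [] t

theorem rightInvParity_inv (w t : W) :
    cs.rightInvParity w⁻¹ t = cs.rightInvParity w (w⁻¹ * t * w) := by
  have h := cs.rightInvParity_mul w w⁻¹ t
  rw [mul_inv_cancel, rightInvParity_one, inv_inv, eq_comm] at h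
  exact CharTwo.add_eq_zero.mp h

theorem rightInvParity_simple_self (i : B) : cs.rightInvParity (s i) (s i) = 1 := by
  simpa [rightInvSeq] using cs.rightInvParity_wordProd [i] (s i)

variable {cs} in
theorem IsReflection.rightInvParity_self {t : W} (ht : cs.IsReflection t) :
    cs.rightInvParity t t = 1 := by
  obtain ⟨w, i, rfl⟩ := ht
  have hconj : w⁻¹ * (w * s i * w⁻¹) * w = s i := by group
  rw [cs.rightInvParity_mul (w * s i) w⁻¹, rightInvParity_inv, hconj, inv_inv,
    cs.rightInvParity_mul w (s i), hconj, rightInvParity_simple_self, mul_inv_cancel_right,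
    add_left_comm, CharTwo.add_self_eq_zero, add_zero]

theorem mem_rightInvSeq_of_rightInvParity_eq_one {ω : List B} {t : W}
    (h : cs.rightInvParity (π ω) t = 1) : t ∈ ris ω := by
  rw [rightInvParity_wordProd] at h
  exact count_pos_iff.mp (Nat.pos_of_ne_zero fun h0 => by simp [h0] at h)

theorem rightInvParity_eq_one_iff {w t : W} (ht : cs.IsReflection t) :
    cs.rightInvParity w t = 1 ↔ ℓ (w * t) < ℓ w := by
  have descent : ∀ w, cs.rightInvParity w t = 1 → ℓ (w * t) < ℓ w := by
    intro w h
    obtain ⟨ω, hω, rfl⟩ := cs.exists_isReduced w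
    exact (cs.isRightInversion_of_mem_rightInvSeq hω
      (cs.mem_rightInvSeq_of_rightInvParity_eq_one h)).2
  refine ⟨descent w, fun h => ?_⟩
  by_contra hne
  have h0 : cs.rightInvParity w t = 0 := (by decide : ∀ x : ZMod 2, x ≠ 1 → x = 0) _ hne
  have hwt : cs.rightInvParity (w * t) t = 1 := by
    rw [rightInvParity_mul, ht.rightInvParity_self, ht.mul_self, one_mul, ht.inv, h0, add_zero]
  have := descent (w * t) hwt
  rw [mul_assoc, ht.mul_self, mul_one] at this
  omega

theorem rightInvParity_eq_zero_iff {w t : W} (ht : cs.IsReflection t) :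
    cs.rightInvParity w t = 0 ↔ ℓ w < ℓ (w * t) := by
  rw [(by decide : ∀ x : ZMod 2, x = 0 ↔ x ≠ 1) _, ne_eq, rightInvParity_eq_one_iff cs ht, not_lt]
  have := ht.length_mul_left_ne w
  omega

end ReflectionCocycle

theorem strong_exchange {t : W} (ht : cs.IsReflection t) {ω : List B}
    (h : ℓ (π ω * t) < ℓ (π ω)) : ∃ k < ω.length, π ω * t = π (ω.eraseIdx k) := by
  obtain ⟨k, hk, rfl⟩ := getElem_of_mem
    (cs.mem_rightInvSeq_of_rightInvParity_eq_one ((cs.rightInvParity_eq_one_iff ht).mpr h))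
  refine ⟨k, by simpa using hk, ?_⟩
  rw [← getD_eq_getElem _ 1 hk, wordProd_mul_getD_rightInvSeq]

theorem exists_isReduced_sublist (ω : List B) :
    ∃ ω', ω' <+ ω ∧ cs.IsReduced ω' ∧ π ω' = π ω := by
  induction ω using List.reverseRecOn with
  | nil => exact ⟨[], Sublist.refl _, by simp [IsReduced], rfl⟩
  | append_singleton ω i ih =>
    obtain ⟨ω', hsub, hred, hπ⟩ := ih
    have hπi : π (ω ++ [i]) = π ω' * s i := by rw [wordProd_append, hπ, wordProd_singleton]
    rcases cs.length_mul_simple (π ω') i with hlen | hlen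
    · refine ⟨ω' ++ [i], hsub.append (Sublist.refl _), ?_, by rw [hπi, wordProd_append,
        wordProd_singleton]⟩
      simp [IsReduced, wordProd_append, hlen, hred.eq]
    · obtain ⟨k, hk, hk'⟩ := cs.strong_exchange (cs.isReflection_simple i)
        (by omega : ℓ (π ω' * s i) < ℓ (π ω'))
      refine ⟨ω'.eraseIdx k, (eraseIdx_sublist _ _).trans (hsub.trans (sublist_append_left _ _)),
        ?_, by rw [hπi, hk']⟩
      have := length_eraseIdx_add_one hk
      have := hred.eq
      rw [IsReduced, ← hk']
      omega

theorem le_mul_right {u t : W} (ht : cs.IsReflection t) (h : ℓ u < ℓ (u * t)) :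
    le cs u (u * t) :=
  .single ⟨⟨t, ht, rfl⟩, h⟩

theorem le_mul_left {u t : W} (ht : cs.IsReflection t) (h : ℓ u < ℓ (t * u)) :
    le cs u (t * u) := by
  have hconj : u * (u⁻¹ * t * u) = t * u := by group
  rw [← hconj] at h ⊢
  exact cs.le_mul_right (by simpa using ht.conj u⁻¹) h

theorem simple_mul_le {w : W} {i : B} (h : ℓ (s i * w) < ℓ w) : le cs (s i * w) w := by
  have := cs.le_mul_left (cs.isReflection_simple i) (u := s i * w)
    (by rwa [simple_mul_simple_cancel_left])
  rwa [simple_mul_simple_cancel_left] at this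

theorem mul_simple_le {w : W} {i : B} (h : ℓ (w * s i) < ℓ w) : le cs (w * s i) w := by
  have := cs.le_mul_right (cs.isReflection_simple i) (u := w * s i)
    (by rwa [simple_mul_simple_cancel_right])
  rwa [simple_mul_simple_cancel_right] at this

theorem simple_mul_mul_eq_of_length_lt {w t : W} {i : B} (ht : cs.IsReflection t)
    (hwt : ℓ (w * t) < ℓ w) (h : ℓ (s i * w) < ℓ (s i * (w * t))) :
    s i * (w * t) = w := by
  obtain ⟨ω, hω, hπ⟩ := cs.exists_isReduced (s i * w)
  have hw' : w = π (i :: ω) := by rw [wordProd_cons, ← hπ, simple_mul_simple_cancel_left]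
  rw [hw'] at hwt
  obtain ⟨k, hk, hk'⟩ := cs.strong_exchange ht hwt
  rw [← hw'] at hk'
  cases k with
  | zero => rw [hk', eraseIdx_cons_zero, ← hπ, simple_mul_simple_cancel_left]
  | succ k =>
    rw [eraseIdx_cons_succ, wordProd_cons] at hk'
    rw [hk', simple_mul_simple_cancel_left] at h
    have := cs.length_wordProd_le (ω.eraseIdx k)
    have := length_eraseIdx_add_one (by simpa using hk : k < ω.length)
    have := hω.eq
    rw [← hπ] at this
    omega

theorem lifting_property {v w : W} (h : le cs v w) (i : B) :
    (ℓ w < ℓ (s i * w) → le cs (s i * v) (s i * w)) ∧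
    (ℓ (s i * w) < ℓ w → ℓ v < ℓ (s i * v) → le cs (s i * v) w) := by
  induction h with
  | refl => exact ⟨fun _ => le.refl _, fun h₁ h₂ => absurd h₁ (by omega)⟩
  | @tail z w hvz hzw ih =>
    obtain ⟨⟨t, ht, rfl⟩, hz⟩ := hzw
    have hzt : le cs z (z * t) := cs.le_mul_right ht hz
    constructor
    · intro hasc
      have hup : le cs (z * t) (s i * (z * t)) := cs.le_mul_left (cs.isReflection_simple i) hasc
      rcases lt_or_gt_of_ne (cs.length_simple_mul_ne v i) with hv | hv
      · exact (cs.simple_mul_le hv).trans ((hvz.trans hzt).trans hup)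
      rcases lt_or_gt_of_ne (cs.length_simple_mul_ne z i) with hsz | hsz
      · exact ((ih.2 hsz hv).trans hzt).trans hup
      refine (ih.1 hsz).trans ?_
      have : ℓ (s i * z) < ℓ (s i * z * t) := by
        have := cs.length_simple_mul z i
        rw [mul_assoc]
        omega
      simpa [mul_assoc] using cs.le_mul_right ht this
    · intro hdesc hv
      rcases lt_or_gt_of_ne (cs.length_simple_mul_ne z i) with hsz | hsz
      · exact (ih.2 hsz hv).trans hzt
      refine (ih.1 hsz).trans ?_
      rcases lt_or_gt_of_ne (ht.length_mul_left_ne (s i * z)) with hszt | hszt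
      · have hztt : z * t * t = z := by rw [mul_assoc, ht.mul_self, mul_one]
        have := cs.simple_mul_mul_eq_of_length_lt (w := z * t) ht (by rwa [hztt])
          (by rwa [hztt, ← mul_assoc])
        rw [hztt] at this
        rw [this]
        exact le.refl _
      · refine le.trans ?_ (cs.simple_mul_le hdesc)
        simpa [mul_assoc] using cs.le_mul_right ht hszt

theorem exists_sublist_of_le {v w : W} (h : le cs v w) {ω : List B} (hω : π ω = w) :
    ∃ ω', ω' <+ ω ∧ π ω' = v := by
  induction h generalizing ω with
  | refl => exact ⟨ω, Sublist.refl _, hω⟩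
  | @tail z _ _ hzw ih =>
    obtain ⟨⟨t, ht, rfl⟩, hz⟩ := hzw
    have hωt : π ω * t = z := by rw [hω, mul_assoc, ht.mul_self, mul_one]
    obtain ⟨k, -, hk⟩ := cs.strong_exchange ht (by rwa [hωt, hω])
    obtain ⟨ω', hsub, hω'⟩ := ih (hk.symm.trans hωt)
    exact ⟨ω', hsub.trans (eraseIdx_sublist _ _), hω'⟩

theorem length_lt_simple_mul_of_isReduced_cons {i : B} {ω : List B}
    (h : cs.IsReduced (i :: ω)) : ℓ (π ω) < ℓ (s i * π ω) := by
  have := cs.length_wordProd_le ω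
  have := h.eq
  rw [wordProd_cons, length_cons] at this
  omega

theorem le_wordProd_of_sublist {ω ω' : List B} (hω : cs.IsReduced ω) (h : ω' <+ ω) :
    le cs (π ω') (π ω) := by
  induction h with
  | slnil => exact le.refl _
  | @cons ω' ω i _ ih =>
    rw [wordProd_cons]
    exact (ih (by simpa using hω.drop 1)).trans
      (cs.le_mul_left (cs.isReflection_simple i) (cs.length_lt_simple_mul_of_isReduced_cons hω))
  | @cons_cons ω' ω i _ ih =>
    rw [wordProd_cons, wordProd_cons]
    exact (cs.lifting_property (ih (by simpa using hω.drop 1)) i).1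
      (cs.length_lt_simple_mul_of_isReduced_cons hω)

theorem simple_le_of_length_mul_simple_lt {w : W} {i : B} (h : ℓ (w * s i) < ℓ w) :
    le cs (s i) w := by
  obtain ⟨ω, hω, hπ⟩ := cs.exists_isReduced (w * s i)
  have hw : w = π (ω ++ [i]) := by
    rw [wordProd_append, ← hπ, wordProd_singleton, simple_mul_simple_cancel_right]
  have hred : cs.IsReduced (ω ++ [i]) := by
    have := hω.eq
    have := cs.length_mul_simple w i
    rw [← hπ] at *
    rw [IsReduced, ← hw, length_append, length_singleton]
    omega
  simpa [← hw] using cs.le_wordProd_of_sublist hred (sublist_append_right ω [i])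

theorem mul_le_mul_of_length_mul_eq {x y a b : W} (hxy : ℓ (x * y) = ℓ x + ℓ y)
    (ha : le cs a x) (hb : le cs b y) : le cs (a * b) (x * y) := by
  obtain ⟨ωx, hωx, rfl⟩ := cs.exists_isReduced x
  obtain ⟨ωy, hωy, rfl⟩ := cs.exists_isReduced y
  obtain ⟨α, hα, rfl⟩ := cs.exists_sublist_of_le ha rfl
  obtain ⟨β, hβ, rfl⟩ := cs.exists_sublist_of_le hb rfl
  have hred : cs.IsReduced (ωx ++ ωy) := by
    rw [IsReduced, wordProd_append, hxy, hωx.eq, hωy.eq, length_append]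
  simpa only [wordProd_append] using cs.le_wordProd_of_sublist hred (hα.append hβ)

theorem exists_mul_eq_of_le_mul {x y z : W} (h : le cs z (x * y)) :
    ∃ a b, a * b = z ∧ le cs a x ∧ le cs b y := by
  obtain ⟨ωx, hωx, rfl⟩ := cs.exists_isReduced x
  obtain ⟨ωy, hωy, rfl⟩ := cs.exists_isReduced y
  obtain ⟨ω, hω, rfl⟩ := cs.exists_sublist_of_le h (wordProd_append _ _ _)
  obtain ⟨α, β, rfl, hα, hβ⟩ := sublist_append_iff.mp hω
  exact ⟨π α, π β, (wordProd_append _ _ _).symm, cs.le_wordProd_of_sublist hωx hα,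
    cs.le_wordProd_of_sublist hωy hβ⟩

variable {K : Set B}

theorem simple_mem_parab {i : B} (hi : i ∈ K) : s i ∈ parab cs K :=
  Subgroup.subset_closure ⟨i, hi, rfl⟩

theorem wordProd_mem_parab {ω : List B} (h : ∀ i ∈ ω, i ∈ K) : π ω ∈ parab cs K := by
  induction ω with
  | nil => exact one_mem _
  | cons i ω ih =>
    rw [wordProd_cons]
    exact mul_mem (cs.simple_mem_parab (h i mem_cons_self))
      (ih fun j hj => h j (mem_cons_of_mem i hj))

theorem exists_word_of_mem_parab {w : W} (hw : w ∈ parab cs K) :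
    ∃ ω : List B, (∀ i ∈ ω, i ∈ K) ∧ π ω = w := by
  induction hw using Subgroup.closure_induction with
  | mem _ h =>
    obtain ⟨i, hi, rfl⟩ := h
    exact ⟨[i], by simpa using hi, wordProd_singleton _ _⟩
  | one => exact ⟨[], by simp, wordProd_nil _⟩
  | mul _ _ _ _ ih₁ ih₂ =>
    obtain ⟨ω₁, hK₁, rfl⟩ := ih₁
    obtain ⟨ω₂, hK₂, rfl⟩ := ih₂
    exact ⟨ω₁ ++ ω₂, by simpa using fun i hi => hi.elim (hK₁ i) (hK₂ i),
      wordProd_append _ _ _⟩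
  | inv _ _ ih =>
    obtain ⟨ω, hK, rfl⟩ := ih
    exact ⟨ω.reverse, by simpa using hK, wordProd_reverse _ _⟩

theorem exists_isReduced_word_of_mem_parab {w : W} (hw : w ∈ parab cs K) :
    ∃ ω : List B, (∀ i ∈ ω, i ∈ K) ∧ cs.IsReduced ω ∧ π ω = w := by
  obtain ⟨ω, hK, rfl⟩ := cs.exists_word_of_mem_parab hw
  obtain ⟨ω', hsub, hred, hπ⟩ := cs.exists_isReduced_sublist ω
  exact ⟨ω', fun i hi => hK i (hsub.subset hi), hred, hπ⟩

theorem mem_parab_of_le {b y : W} (hy : y ∈ parab cs K) (h : le cs b y) : b ∈ parab cs K := by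
  obtain ⟨ω, hK, rfl⟩ := cs.exists_word_of_mem_parab hy
  obtain ⟨ω', hsub, rfl⟩ := cs.exists_sublist_of_le h rfl
  exact cs.wordProd_mem_parab fun i hi => hK i (hsub.subset hi)

theorem exists_length_mul_simple_lt_of_mem_parab {d : W} (hd : d ∈ parab cs K) (hne : d ≠ 1) :
    ∃ j ∈ K, ℓ (d * s j) < ℓ d := by
  obtain ⟨ω, hK, hred, rfl⟩ := cs.exists_isReduced_word_of_mem_parab hd
  obtain rfl | ⟨ω, j, rfl⟩ := eq_nil_or_concat ω
  · exact absurd (wordProd_nil _) hne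
  refine ⟨j, hK j (by simp), ?_⟩
  have := cs.length_wordProd_le ω
  have := hred.eq
  simp only [concat_eq_append, wordProd_append, wordProd_singleton, length_append,
    length_singleton, simple_mul_simple_cancel_right] at this ⊢
  omega

theorem length_mul_of_forall_length_le {a b : W} (hmin : ∀ d ∈ parab cs K, ℓ a ≤ ℓ (a * d))
    (hb : b ∈ parab cs K) : ℓ (a * b) = ℓ a + ℓ b := by
  obtain ⟨β, hK, hβ, rfl⟩ := cs.exists_isReduced_word_of_mem_parab hb
  rw [hβ.eq]
  clear hb
  induction β using List.reverseRecOn with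
  | nil => simp
  | append_singleton β j ih =>
    have hβK : ∀ i ∈ β, i ∈ K := fun i hi => hK i (mem_append_left _ hi)
    have hasc : ℓ (π β) < ℓ (π β * s j) := by
      have := cs.length_wordProd_le β
      have := hβ.eq
      rw [wordProd_append, wordProd_singleton, length_append, length_singleton] at this
      omega
    have ih := ih hβK (by simpa using hβ.take β.length)
    rw [wordProd_append, wordProd_singleton, ← mul_assoc, length_append, length_singleton,
      ← add_assoc, ← ih]
    refine (cs.length_mul_simple _ j).resolve_right fun hdesc => ?_
    -- by the cocycle identity, the descent `s j` of `a * π β` is the inversion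
    -- `π β * s j * (π β)⁻¹ ∈ W_K` of `a`
    have hparity := (cs.rightInvParity_eq_one_iff (cs.isReflection_simple j)).mpr
      (by omega : ℓ (a * π β * s j) < ℓ (a * π β))
    rw [rightInvParity_mul, (cs.rightInvParity_eq_zero_iff (cs.isReflection_simple j)).mpr hasc,
      zero_add, rightInvParity_eq_one_iff cs ((cs.isReflection_simple j).conj _)] at hparity
    have := hmin _ (mul_mem (mul_mem (cs.wordProd_mem_parab hβK)
      (cs.simple_mem_parab (hK j (by simp)))) (inv_mem (cs.wordProd_mem_parab hβK)))
    omega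

theorem length_le_mul_of_inQuot {a d : W} (ha : InQuot cs K a) (hd : d ∈ parab cs K) :
    ℓ a ≤ ℓ (a * d) := by
  obtain ⟨m, hm, hmin⟩ := (measure fun d => ℓ (a * d)).wf.has_min (parab cs K) ⟨1, one_mem _⟩
  have hmin' : ∀ d ∈ parab cs K, ℓ (a * m) ≤ ℓ (a * m * d) := fun d hd => by
    rw [mul_assoc]
    exact not_lt.mp (hmin _ (mul_mem hm hd))
  obtain rfl : m = 1 := by
    by_contra hne
    obtain ⟨j, hj, hlt⟩ :=
      cs.exists_length_mul_simple_lt_of_mem_parab (inv_mem hm) (inv_ne_one.mpr hne)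
    have h₁ := cs.length_mul_of_forall_length_le hmin' (inv_mem hm)
    have h₂ := cs.length_mul_of_forall_length_le hmin'
      (mul_mem (inv_mem hm) (cs.simple_mem_parab hj))
    rw [mul_inv_cancel_right] at h₁
    rw [mul_assoc, mul_inv_cancel_left] at h₂
    have := ha j hj
    omega
  have : ¬ ℓ (a * d) < ℓ (a * 1) := hmin d hd
  rw [mul_one] at this
  exact not_lt.mp this

theorem length_mul_of_inQuot {a b : W} (ha : InQuot cs K a) (hb : b ∈ parab cs K) :
    ℓ (a * b) = ℓ a + ℓ b :=
  cs.length_mul_of_forall_length_le (fun _ => cs.length_le_mul_of_inQuot ha) hb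

theorem eq_and_eq_of_inQuot_of_mul_eq {a a' b b' : W} (ha : InQuot cs K a)
    (ha' : InQuot cs K a') (hb : b ∈ parab cs K) (hb' : b' ∈ parab cs K)
    (h : a * b = a' * b') : a = a' ∧ b = b' := by
  have hd : b * b'⁻¹ ∈ parab cs K := mul_mem hb (inv_mem hb')
  have h₁ : a' = a * (b * b'⁻¹) := by rw [← mul_assoc, h, mul_inv_cancel_right]
  have h₂ : a = a' * (b * b'⁻¹)⁻¹ := by rw [h₁, mul_inv_cancel_right]
  have e₁ := cs.length_mul_of_inQuot ha hd
  have e₂ := cs.length_mul_of_inQuot ha' (inv_mem hd)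
  rw [← h₁] at e₁
  rw [← h₂, length_inv] at e₂
  obtain rfl : b = b' := mul_inv_eq_one.mp (cs.length_eq_zero_iff.mp (by omega))
  exact ⟨mul_right_cancel h, rfl⟩

theorem exists_inQuot_mul_eq_of_le {x y a b : W} (hBP : supp cs x ∩ K ⊆ DescL cs y)
    (ha : le cs a x) (hb : le cs b y) :
    ∃ a' b', a' * b' = a * b ∧ le cs a' x ∧ InQuot cs K a' ∧ le cs b' y := by
  induction hn : ℓ a using Nat.strong_induction_on generalizing a b with
  | _ n ih =>
  by_cases hq : InQuot cs K a
  · exact ⟨a, b, rfl, ha, hq, hb⟩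
  obtain ⟨j, hj, hdesc⟩ : ∃ j ∈ K, ℓ (a * s j) < ℓ a := by
    simp only [InQuot, not_forall, not_lt] at hq
    obtain ⟨j, hj, h⟩ := hq
    exact ⟨j, hj, lt_of_le_of_ne h (cs.length_mul_simple_ne a j)⟩
  have hy : ℓ (s j * y) < ℓ y := hBP ⟨(cs.simple_le_of_length_mul_simple_lt hdesc).trans ha, hj⟩
  have hb' : le cs (s j * b) y := by
    rcases lt_or_gt_of_ne (cs.length_simple_mul_ne b j) with h | h
    · exact (cs.simple_mul_le h).trans hb
    · exact (cs.lifting_property hb j).2 hy h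
  obtain ⟨a', b', heq, h⟩ := ih _ (hn ▸ hdesc) ((cs.mul_simple_le hdesc).trans ha) hb' rfl
  exact ⟨a', b', by rw [heq, mul_assoc, simple_mul_simple_cancel_left], h⟩

end CoxeterSystem

theorem stmt8_general {B W : Type*} [Group W] {M : CoxeterMatrix B} (cs : CoxeterSystem M W)
    (K : Set B) (u x y : W) (hu : u = x * y)
    (hx : InQuot cs K x) (hy : y ∈ parab cs K)
    (hBP : supp cs x ∩ K ⊆ DescL cs y) :
    ∃ F : ({a : W // le cs a x ∧ InQuot cs K a} × {b : W // le cs b y}) ≃ {z : W // le cs z u},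
      (∀ p, ((F p : W) = (p.1 : W) * (p.2 : W))) ∧
      (∀ p q, le cs (p.1 : W) (q.1 : W) → le cs (p.2 : W) (q.2 : W) → le cs (F p : W) (F q : W)) := by
  have hmono : ∀ {a b c d : W}, InQuot cs K c → le cs d y → le cs a c → le cs b d →
      le cs (a * b) (c * d) := fun hc hd =>
    cs.mul_le_mul_of_length_mul_eq (cs.length_mul_of_inQuot hc (cs.mem_parab_of_le hy hd))
  let F : {a : W // le cs a x ∧ InQuot cs K a} × {b : W // le cs b y} → {z : W // le cs z u} :=
    fun p => ⟨p.1 * p.2, hu ▸ hmono hx (le.refl y) p.1.2.1 p.2.2⟩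
  have hinj : Function.Injective F := by
    rintro ⟨⟨a, _, ha⟩, ⟨b, hb⟩⟩ ⟨⟨a', _, ha'⟩, ⟨b', hb'⟩⟩ h
    obtain ⟨rfl, rfl⟩ := cs.eq_and_eq_of_inQuot_of_mul_eq ha ha' (cs.mem_parab_of_le hy hb)
      (cs.mem_parab_of_le hy hb') (congrArg Subtype.val h)
    rfl
  have hsurj : Function.Surjective F := by
    rintro ⟨z, hz⟩
    obtain ⟨a, b, rfl, ha, hb⟩ := cs.exists_mul_eq_of_le_mul (hu ▸ hz)
    obtain ⟨a', b', heq, ha', hq, hb'⟩ := cs.exists_inQuot_mul_eq_of_le hBP ha hb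
    exact ⟨(⟨a', ha', hq⟩, ⟨b', hb'⟩), Subtype.ext heq⟩
  exact ⟨.ofBijective F ⟨hinj, hsurj⟩, fun _ => rfl, fun p q h₁ h₂ => hmono q.1.2.2 q.2.2 h₁ h₂⟩

theorem stmt8 {B W : Type*} [Group W] {M : CoxeterMatrix B} (cs : CoxeterSystem M W)
    (K : Set B) (u x y : W) (hu : u = x * y)
    (hx : InQuot cs K x) (hy : y ∈ parab cs K)
    (hadd : cs.length u = cs.length x + cs.length y)
    (hBP : supp cs x ∩ K ⊆ DescL cs y) :
    ∃ F : ({a : W // le cs a x ∧ InQuot cs K a} × {b : W // le cs b y}) ≃ {z : W // le cs z u},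
      (∀ p, ((F p : W) = (p.1 : W) * (p.2 : W))) ∧
      (∀ p q, le cs (p.1 : W) (q.1 : W) → le cs (p.2 : W) (q.2 : W) → le cs (F p : W) (F q : W)) :=
  stmt8_general cs K u x y hu hx hy hBP
end
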